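/- arXiv:2210.13818 — 5 statements merged into one kernel-verified Lean document; each statement's English description precedes it below -/
import Mathlib

section
/- Let p₁,…,pₙ ∈ (0,1), let Ψ(w) = ∏_{i=1}^n (1 + p_i(w−1))·e^{−p_i(w−1)} with Taylor expansion Ψ(w) = 1 + Σ_{s≥1} b_s (w−1)^s around w = 1, and let σ² = Σ_{i=1}^n p_i². Then for every s ≥ 2, |b_s| ≤ (e·σ²/s)^{s/2}. -/
/-!
Each factor satisfies `|(1 + u) e^{-u}| ≤ e^{|u|²/2}` (square it and use `1 + x ≤ eˣ`), so
`|Ψ(w)| ≤ exp(σ² |w - 1|² / 2)` on the whole plane. Cauchy's estimate on the circle of radius `R`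
around `1` gives `|b_s| ≤ exp(σ² R² / 2) / R^s`, and the choice `R² = s / σ²` yields the bound.
-/

open Complex Filter Metric

theorem norm_one_add_mul_exp_neg_le (u : ℂ) :
    ‖(1 + u) * exp (-u)‖ ≤ Real.exp (‖u‖ ^ 2 / 2) := by
  have hsq : ‖1 + u‖ ^ 2 ≤ Real.exp (u.re + ‖u‖ ^ 2 / 2) ^ 2 := by
    calc ‖1 + u‖ ^ 2 = 2 * u.re + ‖u‖ ^ 2 + 1 := by
          rw [Complex.sq_norm, Complex.sq_norm, normSq_apply, normSq_apply]
          simp only [add_re, one_re, add_im, one_im, zero_add]; ring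
      _ ≤ Real.exp (2 * u.re + ‖u‖ ^ 2) := Real.add_one_le_exp _
      _ = Real.exp (u.re + ‖u‖ ^ 2 / 2) ^ 2 := by rw [← Real.exp_nat_mul]; push_cast; ring_nf
  calc ‖(1 + u) * exp (-u)‖ = ‖1 + u‖ * Real.exp (-u.re) := by rw [norm_mul, norm_exp, neg_re]
    _ ≤ Real.exp (u.re + ‖u‖ ^ 2 / 2) * Real.exp (-u.re) := by
      gcongr; exact le_of_pow_le_pow_left₀ two_ne_zero (by positivity) hsq
    _ = Real.exp (‖u‖ ^ 2 / 2) := by rw [← Real.exp_add]; ring_nf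

theorem norm_prod_one_add_mul_exp_neg_mul_le {ι : Type*} (t : Finset ι) (p : ι → ℝ) (z : ℂ) :
    ‖∏ i ∈ t, (1 + (p i : ℂ) * z) * exp (-(p i : ℂ) * z)‖ ≤
      Real.exp ((∑ i ∈ t, p i ^ 2) * ‖z‖ ^ 2 / 2) := by
  rw [norm_prod, Finset.sum_mul, Finset.sum_div, Real.exp_sum]
  refine Finset.prod_le_prod (fun _ _ => norm_nonneg _) fun i _ => ?_
  simpa [neg_mul, mul_pow] using norm_one_add_mul_exp_neg_le ((p i : ℂ) * z)

theorem hasFPowerSeriesOnBall_ofScalars_of_forall_hasSum {f : ℂ → ℂ} {b : ℕ → ℂ} {c : ℂ}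
    (hb : ∀ z, HasSum (fun s => b s * (z - c) ^ s) (f z)) :
    HasFPowerSeriesOnBall f (FormalMultilinearSeries.ofScalars ℂ b) c ⊤ where
  r_le := le_of_eq <| Eq.symm <| ENNReal.eq_top_of_forall_nnreal_le fun r =>
    FormalMultilinearSeries.le_radius_of_tendsto _ (l := 0) <| by
      simpa using (hb (c + r)).summable.tendsto_atTop_zero.norm
  r_pos := ENNReal.zero_lt_top
  hasSum {y} _ := by
    simpa [FormalMultilinearSeries.ofScalars_apply_eq, mul_comm] using hb (c + y)

theorem norm_coeff_le_of_forall_hasSum {f : ℂ → ℂ} {b : ℕ → ℂ} {c : ℂ}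
    (hb : ∀ z, HasSum (fun s => b s * (z - c) ^ s) (f z)) {R C : ℝ} (hR : 0 < R)
    (hC : ∀ z ∈ sphere c R, ‖f z‖ ≤ C) (s : ℕ) :
    ‖b s‖ ≤ C / R ^ s := by
  have hf := hasFPowerSeriesOnBall_ofScalars_of_forall_hasSum hb
  have hdiff : Differentiable ℂ f := fun z => (hf.analyticAt_of_mem (by simp)).differentiableAt
  have hcoeff : b s = iteratedDeriv s f c / s.factorial := by
    have := FormalMultilinearSeries.ofScalars_series_injective ℂ (𝕜 := ℂ)
      (hf.hasFPowerSeriesAt.eq_formalMultilinearSeries (hdiff.analyticAt c).hasFPowerSeriesAt)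
    exact congrFun this s
  have hcauchy := norm_iteratedDeriv_le_of_forall_mem_sphere_norm_le s hR hdiff.diffContOnCl hC
  rw [hcoeff, norm_div, Complex.norm_natCast, div_le_iff₀ (by positivity)]
  calc ‖iteratedDeriv s f c‖ ≤ s.factorial * C / R ^ s := hcauchy
    _ = C / R ^ s * s.factorial := by ring

theorem le_rpow_of_forall_le_exp_div_pow {x σ : ℝ} {s : ℕ} (hσ : 0 ≤ σ) (hs : s ≠ 0)
    (h : ∀ R > 0, x ≤ Real.exp (σ * R ^ 2 / 2) / R ^ s) :
    x ≤ (Real.exp 1 * σ / s) ^ ((s : ℝ) / 2) := by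
  have hs' : (0 : ℝ) < s := by positivity
  rcases hσ.eq_or_lt with rfl | hσ
  · rw [mul_zero, zero_div, Real.zero_rpow (by positivity)]
    refine ge_of_tendsto ((tendsto_pow_atTop hs).inv_tendsto_atTop) ?_
    filter_upwards [eventually_gt_atTop 0] with R hR
    simpa only [zero_mul, zero_div, Real.exp_zero, one_div, Pi.inv_apply] using h R hR
  · set R := Real.sqrt (s / σ)
    have hR2 : R ^ 2 = s / σ := Real.sq_sqrt (by positivity)
    have hRs : R ^ s = (s / σ : ℝ) ^ ((s : ℝ) / 2) := by
      rw [← hR2, ← Real.rpow_natCast, ← Real.rpow_natCast, ← Real.rpow_mul (by positivity)]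
      congr 1; ring
    have hexp : Real.exp (σ * R ^ 2 / 2) = Real.exp 1 ^ ((s : ℝ) / 2) := by
      rw [hR2, Real.exp_one_rpow]; congr 1; field_simp
    calc x ≤ Real.exp (σ * R ^ 2 / 2) / R ^ s := h R (by positivity)
      _ = (Real.exp 1 * σ / s) ^ ((s : ℝ) / 2) := by
        rw [hexp, hRs, ← Real.div_rpow (by positivity) (by positivity)]
        congr 1; field_simp

theorem stmt_1_general (n : ℕ) (p : Fin n → ℝ)
    (b : ℕ → ℂ)
    (hb : ∀ w : ℂ, HasSum (fun s : ℕ => b s * (w - 1) ^ s)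
      (∏ i, (1 + (p i : ℂ) * (w - 1)) * Complex.exp (-(p i : ℂ) * (w - 1))))
    (σ2 : ℝ) (hσ : σ2 = ∑ i, (p i) ^ 2) :
    ∀ s : ℕ, 2 ≤ s →
      ‖b s‖ ≤ (Real.exp 1 * σ2 / s) ^ ((s : ℝ) / 2) := by
  intro s hs
  refine le_rpow_of_forall_le_exp_div_pow (by rw [hσ]; positivity) (by omega) fun R hR => ?_
  refine norm_coeff_le_of_forall_hasSum hb hR (fun w hw => ?_) s
  rw [mem_sphere_iff_norm] at hw
  simpa only [hσ, hw] using norm_prod_one_add_mul_exp_neg_mul_le Finset.univ p (w - 1)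

/-- Cauchy bound for the Taylor coefficients at `w = 1` of
`Ψ(w) = ∏ i, (1 + pᵢ(w-1)) exp(-pᵢ(w-1))`. -/
theorem stmt_1 (n : ℕ) (p : Fin n → ℝ) (hp : ∀ i, p i ∈ Set.Ioo (0 : ℝ) 1)
    (b : ℕ → ℂ)
    (hb : ∀ w : ℂ, HasSum (fun s : ℕ => b s * (w - 1) ^ s)
      (∏ i, (1 + (p i : ℂ) * (w - 1)) * Complex.exp (-(p i : ℂ) * (w - 1))))
    (σ2 : ℝ) (hσ : σ2 = ∑ i, (p i) ^ 2) :
    ∀ s : ℕ, 2 ≤ s →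
      ‖b s‖ ≤ (Real.exp 1 * σ2 / s) ^ ((s : ℝ) / 2) :=
  stmt_1_general n p b hb σ2 hσ
end

section
/- For any real a and any natural number m, the Hermite polynomial satisfies the multiplication theorem H_m(a·x) = Σ_{l=0}^{⌊m/2⌋} a^{m−2l}·(a²−1)^l·C(m,2l)·((2l)!/(2^l·l!))·H_{m−2l}(x). -/
/-!
As polynomials in `x`, both sides form Appell-type sequences with the same rule: from
`H_{m+1}' = (m+1) H_m` one gets `(H_{m+1}(a x))' = a (m+1) H_m(a x)`, and the identity
`C(m+1, 2l) (m+1-2l) = (m+1) C(m, 2l)` gives the same rule for the right-hand side. By induction on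
`m` the two sides differ by a constant, which vanishes: at `x = 0` only even degrees survive,
`H_{2n}(0) = (-1)^n (2n-1)‼`, and `C(2n, 2l) (2l-1)‼ (2n-2l-1)‼ = C(n, l) (2n-1)‼` turns the
right-hand side into `(2n-1)‼ ((a² - 1) - a²)^n`.
-/

open Polynomial Finset
open scoped Nat

namespace Polynomial

theorem derivative_hermite_succ (n : ℕ) :
    derivative (hermite (n + 1)) = (n + 1 : ℤ[X]) * hermite n := by
  induction n with
  | zero => simp
  | succ n ih =>
    rw [hermite_succ (n + 1), derivative_sub, derivative_mul, derivative_X, ih, derivative_mul]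
    simp only [derivative_add, derivative_natCast, derivative_one, add_zero, zero_mul, zero_add]
    rw [hermite_succ n]
    push_cast
    ring

theorem derivative_hermite (n : ℕ) : derivative (hermite n) = n * hermite (n - 1) := by
  cases n with
  | zero => simp
  | succ n => simpa using derivative_hermite_succ n

theorem eval_zero_hermite_two_mul (n : ℕ) :
    (hermite (2 * n)).eval 0 = (-1) ^ n * (2 * n - 1)‼ := by
  simpa [← coeff_zero_eq_eval_zero] using coeff_hermite_explicit n 0

theorem eval_zero_hermite_two_mul_add_one (n : ℕ) : (hermite (2 * n + 1)).eval 0 = 0 := by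
  simpa [← coeff_zero_eq_eval_zero] using
    coeff_hermite_of_odd_add (k := 0) (odd_two_mul_add_one n)

end Polynomial

namespace Nat

theorem factorial_two_mul (k : ℕ) : (2 * k)! = 2 ^ k * k ! * (2 * k - 1)‼ := by
  cases k with
  | zero => rfl
  | succ k =>
    rw [show 2 * (k + 1) = 2 * k + 1 + 1 by ring, factorial_eq_mul_doubleFactorial,
      show 2 * k + 1 + 1 = 2 * (k + 1) by ring, doubleFactorial_two_mul]
    rfl

theorem choose_two_mul_mul_doubleFactorial {n l : ℕ} (h : l ≤ n) :
    (2 * n).choose (2 * l) * (2 * l - 1)‼ * (2 * (n - l) - 1)‼ =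
      n.choose l * (2 * n - 1)‼ := by
  have key := choose_mul_factorial_mul_factorial (show 2 * l ≤ 2 * n by omega)
  rw [show 2 * n - 2 * l = 2 * (n - l) by omega, factorial_two_mul, factorial_two_mul,
    factorial_two_mul, ← choose_mul_factorial_mul_factorial h] at key
  have hpos : 0 < 2 ^ n * l ! * (n - l)! := by positivity
  refine Nat.eq_of_mul_eq_mul_right hpos ?_
  rw [show 2 ^ n = 2 ^ l * 2 ^ (n - l) by rw [← pow_add, Nat.add_sub_cancel' h]] at key ⊢
  convert key using 1 <;> ring

end Nat

section Multiplication

variable {R : Type*} [CommRing R]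

noncomputable def hermiteMulCoeff (a : R) (m l : ℕ) : R :=
  a ^ (m - 2 * l) * (a ^ 2 - 1) ^ l * m.choose (2 * l) * (2 * l - 1)‼

noncomputable def hermiteMulSum (a : R) (m : ℕ) : R[X] :=
  ∑ l ∈ range (m / 2 + 1),
    C (hermiteMulCoeff a m l) * (hermite (m - 2 * l)).map (algebraMap ℤ R)

theorem hermiteMulCoeff_of_lt {a : R} {m l : ℕ} (h : m < 2 * l) : hermiteMulCoeff a m l = 0 := by
  simp [hermiteMulCoeff, Nat.choose_eq_zero_of_lt h]

theorem hermiteMulSum_eq_sum_range (a : R) {m N : ℕ} (hN : m / 2 < N) :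
    hermiteMulSum a m =
      ∑ l ∈ range N,
        C (hermiteMulCoeff a m l) * (hermite (m - 2 * l)).map (algebraMap ℤ R) := by
  refine sum_subset (range_subset_range.2 hN) fun l _ hl => ?_
  rw [hermiteMulCoeff_of_lt (by rw [mem_range] at hl; omega), C_0, zero_mul]

theorem hermiteMulCoeff_succ_mul (a : R) (m l : ℕ) :
    hermiteMulCoeff a (m + 1) l * (m + 1 - 2 * l : ℕ) = a * (m + 1) * hermiteMulCoeff a m l := by
  have hc : ((m + 1).choose (2 * l) : R) * ((m + 1 - 2 * l : ℕ) : R) =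
      m.choose (2 * l) * (m + 1) := by
    rw [← Nat.cast_mul, ← Nat.choose_mul_succ_eq]
    push_cast
    ring
  rcases le_or_gt (2 * l) m with h | h
  · rw [hermiteMulCoeff, hermiteMulCoeff,
      show a ^ (m + 1 - 2 * l) = a * a ^ (m - 2 * l) by rw [Nat.sub_add_comm h, pow_succ']]
    linear_combination a * a ^ (m - 2 * l) * (a ^ 2 - 1) ^ l * ((2 * l - 1)‼ : R) * hc
  · rw [Nat.choose_eq_zero_of_lt h, Nat.cast_zero, zero_mul] at hc
    rw [hermiteMulCoeff_of_lt h, hermiteMulCoeff, mul_zero]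
    linear_combination a ^ (m + 1 - 2 * l) * (a ^ 2 - 1) ^ l * ((2 * l - 1)‼ : R) * hc

theorem derivative_hermiteMulSum_succ (a : R) (m : ℕ) :
    derivative (hermiteMulSum a (m + 1)) = C (a * (m + 1)) * hermiteMulSum a m := by
  rw [hermiteMulSum_eq_sum_range a (N := m + 1) (by omega),
    hermiteMulSum_eq_sum_range a (N := m + 1) (by omega), derivative_sum, mul_sum]
  refine sum_congr rfl fun l _ => ?_
  rw [derivative_C_mul, derivative_map, derivative_hermite, Polynomial.map_mul,
    Polynomial.map_natCast, show m + 1 - 2 * l - 1 = m - 2 * l by omega, ← C_eq_natCast,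
    ← mul_assoc, ← mul_assoc, ← C_mul, ← C_mul, hermiteMulCoeff_succ_mul]

theorem derivative_hermite_comp_succ (a : R) (m : ℕ) :
    derivative ((hermite (m + 1)).map (algebraMap ℤ R) |>.comp (C a * X)) =
      C (a * (m + 1)) * ((hermite m).map (algebraMap ℤ R)).comp (C a * X) := by
  rw [derivative_comp, derivative_C_mul_X, derivative_map, derivative_hermite, Polynomial.map_mul,
    Polynomial.map_natCast, mul_comp, natCast_comp, Nat.add_sub_cancel, C_mul, ← C_eq_natCast]
  push_cast
  ring

theorem eval_zero_hermiteMulSum (a : R) (m : ℕ) :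
    eval 0 (hermiteMulSum a m) = (((hermite m).eval 0 : ℤ) : R) := by
  obtain ⟨n, rfl | rfl⟩ := Nat.even_or_odd' m
  · calc eval 0 (hermiteMulSum a (2 * n))
        = ∑ l ∈ range (n + 1),
            ((2 * n - 1)‼ : R) * ((a ^ 2 - 1) ^ l * (-a ^ 2) ^ (n - l) * n.choose l) := by
          rw [hermiteMulSum, show 2 * n / 2 = n by omega, eval_finsetSum]
          refine sum_congr rfl fun l hl => ?_
          have hln : l ≤ n := Nat.lt_succ_iff.1 (mem_range.1 hl)
          have hd := congrArg (Nat.cast (R := R)) (Nat.choose_two_mul_mul_doubleFactorial hln)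
          rw [eval_mul, eval_C, eval_zero_map, hermiteMulCoeff,
            show 2 * n - 2 * l = 2 * (n - l) by omega, eval_zero_hermite_two_mul]
          push_cast at hd ⊢
          linear_combination (a ^ 2 - 1) ^ l * (-a ^ 2) ^ (n - l) * hd
      _ = ((2 * n - 1)‼ : R) * ((a ^ 2 - 1) + -a ^ 2) ^ n := by rw [add_pow, mul_sum]
      _ = (((hermite (2 * n)).eval 0 : ℤ) : R) := by
          rw [eval_zero_hermite_two_mul]
          push_cast
          ring
  · rw [hermiteMulSum, eval_finsetSum, eval_zero_hermite_two_mul_add_one, Int.cast_zero]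
    refine sum_eq_zero fun l hl => ?_
    rw [show 2 * n + 1 - 2 * l = 2 * (n - l) + 1 by have := mem_range.1 hl; omega, eval_mul,
      eval_zero_map, eval_zero_hermite_two_mul_add_one, map_zero, mul_zero]

theorem eq_of_derivative_eq_of_eval_zero_eq [IsAddTorsionFree R] {p q : R[X]}
    (hd : derivative p = derivative q) (h0 : p.eval 0 = q.eval 0) : p = q := by
  have h := eq_C_of_derivative_eq_zero (p := p - q) (by rw [derivative_sub, hd, sub_self])
  rw [coeff_zero_eq_eval_zero, eval_sub, h0, sub_self, C_0, sub_eq_zero] at h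
  exact h

theorem hermite_comp_C_mul_X [IsAddTorsionFree R] (a : R) (m : ℕ) :
    ((hermite m).map (algebraMap ℤ R)).comp (C a * X) = hermiteMulSum a m := by
  refine eq_of_derivative_eq_of_eval_zero_eq ?_ ?_
  · cases m with
    | zero => simp [hermiteMulSum]
    | succ m =>
      rw [derivative_hermite_comp_succ, derivative_hermiteMulSum_succ, hermite_comp_C_mul_X]
  · rw [eval_comp, eval_zero_hermiteMulSum]
    simp

end Multiplication

/-- Multiplication theorem for the probabilists' Hermite polynomials. -/
theorem stmt_2 (a x : ℝ) (m : ℕ) :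
    Polynomial.aeval (a * x) (Polynomial.hermite m) =
      ∑ l ∈ Finset.range (m / 2 + 1),
        a ^ (m - 2 * l) * (a ^ 2 - 1) ^ l * (m.choose (2 * l)) *
          ((2 * l).factorial / (2 ^ l * l.factorial) : ℝ) *
          Polynomial.aeval x (Polynomial.hermite (m - 2 * l)) := by
  have h := congrArg (eval x) (hermite_comp_C_mul_X a m)
  simp only [eval_comp, eval_mul, eval_C, eval_X, eval_map_algebraMap, hermiteMulSum,
    eval_finsetSum, hermiteMulCoeff] at h
  rw [h]
  refine sum_congr rfl fun l _ => ?_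
  rw [Nat.factorial_two_mul, Nat.cast_mul, Nat.cast_mul, Nat.cast_pow, Nat.cast_two,
    mul_div_cancel_left₀ _ (by positivity)]
end

section
/- For every n ≥ 1 and every complex number z with |z| = √n·y (y ≥ 0), the probabilists' Hermite polynomial satisfies |H_n(z)| ≤ e^{|z|²/4} · 3^{n/2} · √(n!) · e^{1/2} · n^{1/4}. -/
/-!
Expanding `H_n` in monomials, `|coeff k| = n! / (k! 2^l l!)` when `n = k + 2l` (and `0` otherwise),
so for every `r ≥ 0`
`|H_n(z)| rⁿ ≤ n! Σ_k (|z| r)^k / k! · (r²/2)^l / l! ≤ n! exp (|z| r + r²/2)`,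
a Cauchy estimate for the generating function `exp (zu - u²/2)` on `|u| = r`.
Since `|z| r ≤ |z|²/4 + r²`, the choice `r² = n/3` gives
`|H_n(z)| ≤ e^{|z|²/4} n! e^{n/2} (3/n)^{n/2}`, and the upper Stirling bound
`n! ≤ e √n (n/e)ⁿ` turns `n! e^{n/2}` into `√(n!) e^{1/2} n^{1/4} n^{n/2}`.
-/

open Polynomial

open scoped Nat
open Finset Real

theorem Nat.doubleFactorial_two_mul_sub_one_mul (l : ℕ) :
    (2 * l - 1)‼ * (2 ^ l * l !) = (2 * l)! := by
  rw [← Nat.doubleFactorial_two_mul]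
  cases l with
  | zero => rfl
  | succ m =>
    rw [mul_comm, show 2 * (m + 1) = 2 * m + 1 + 1 by ring, Nat.factorial_eq_mul_doubleFactorial]
    rfl

namespace Polynomial

theorem abs_coeff_hermite_two_mul_add (l k : ℕ) :
    |((hermite (2 * l + k)).coeff k : ℝ)| = (2 * l + k)! / (2 ^ l * l ! * k !) := by
  rw [eq_div_iff (by positivity), coeff_hermite_explicit]
  push_cast
  rw [abs_mul, abs_mul, abs_pow, abs_neg, abs_one, one_pow, one_mul, Nat.abs_cast, Nat.abs_cast]
  exact_mod_cast calc
    (2 * l - 1)‼ * (2 * l + k).choose k * (2 ^ l * l ! * k !)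
      = (2 * l + k).choose k * ((2 * l - 1)‼ * (2 ^ l * l !)) * k ! := by ring
    _ = (2 * l + k)! := by
      rw [Nat.doubleFactorial_two_mul_sub_one_mul, Nat.add_choose_mul_factorial_mul_factorial]

theorem norm_aeval_hermite_le {A : Type*} [NormedRing A] [NormOneClass A] (n : ℕ) (a : A) :
    ‖aeval a (hermite n)‖ ≤ ∑ k ∈ range (n + 1), |((hermite n).coeff k : ℝ)| * ‖a‖ ^ k := by
  rw [aeval_eq_sum_range, natDegree_hermite]
  refine (norm_sum_le _ _).trans (sum_le_sum fun k _ => ?_)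
  refine (norm_zsmul_le _ _).trans ?_
  rw [Int.norm_eq_abs]
  gcongr
  exact norm_pow_le a k

theorem abs_coeff_hermite_mul_pow_le {n k : ℕ} (hk : k ≤ n) {x r : ℝ} (hx : 0 ≤ x)
    (hr : 0 ≤ r) :
    |((hermite n).coeff k : ℝ)| * x ^ k * r ^ n ≤ n ! * ((x * r) ^ k / k !) * exp (r ^ 2 / 2) := by
  rcases Nat.even_or_odd (n - k) with ⟨l, hl⟩ | hodd
  · obtain rfl : n = 2 * l + k := by omega
    have hterm : |((hermite (2 * l + k)).coeff k : ℝ)| * x ^ k * r ^ (2 * l + k)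
        = (2 * l + k)! * ((x * r) ^ k / k !) * ((r ^ 2 / 2) ^ l / l !) := by
      rw [abs_coeff_hermite_two_mul_add, pow_add, pow_mul, mul_pow, div_pow]
      field_simp
    rw [hterm]
    gcongr
    exact pow_div_factorial_le_exp _ (by positivity) l
  · have hodd_add : Odd (n + k) := by
      rw [show n + k = n - k + 2 * k by omega]
      exact hodd.add_even (even_two_mul k)
    rw [coeff_hermite_of_odd_add hodd_add]
    simp only [Int.cast_zero, abs_zero, zero_mul]
    positivity

theorem norm_aeval_hermite_mul_pow_le {A : Type*} [NormedRing A] [NormOneClass A] (n : ℕ) (a : A)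
    {r : ℝ} (hr : 0 ≤ r) : ‖aeval a (hermite n)‖ * r ^ n ≤ n ! * exp (‖a‖ * r + r ^ 2 / 2) :=
  calc ‖aeval a (hermite n)‖ * r ^ n
      ≤ ∑ k ∈ range (n + 1), |((hermite n).coeff k : ℝ)| * ‖a‖ ^ k * r ^ n := by
        rw [← sum_mul]
        gcongr
        exact norm_aeval_hermite_le n a
    _ ≤ ∑ k ∈ range (n + 1), n ! * ((‖a‖ * r) ^ k / k !) * exp (r ^ 2 / 2) :=
        sum_le_sum fun k hk =>
          abs_coeff_hermite_mul_pow_le (Nat.lt_succ_iff.mp (mem_range.mp hk)) (norm_nonneg a) hr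
    _ ≤ n ! * exp (‖a‖ * r) * exp (r ^ 2 / 2) := by
        rw [← sum_mul, ← mul_sum]
        gcongr
        exact sum_le_exp_of_nonneg (by positivity) _
    _ = n ! * exp (‖a‖ * r + r ^ 2 / 2) := by rw [exp_add, mul_assoc]

end Polynomial

namespace Stirling

theorem factorial_le_exp_one_mul_sqrt_mul {n : ℕ} (hn : n ≠ 0) :
    (n ! : ℝ) ≤ exp 1 * √n * (n / exp 1) ^ n := by
  obtain ⟨m, rfl⟩ := Nat.exists_eq_add_one_of_ne_zero hn
  have hseq : stirlingSeq (m + 1) ≤ exp 1 / √2 :=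
    stirlingSeq_one ▸ stirlingSeq'_antitone (Nat.zero_le m)
  rw [stirlingSeq, div_le_div_iff₀ (by positivity) (by positivity), Real.sqrt_mul zero_le_two,
    show ∀ a b c d : ℝ, a * (b * c * d) = a * c * d * b by intros; ring] at hseq
  exact le_of_mul_le_mul_right hseq (by positivity)

end Stirling

namespace Real

theorem exp_sq (x : ℝ) : exp x ^ 2 = exp (2 * x) := by
  rw [← exp_nat_mul]; norm_num

theorem rpow_div_two_sq {x : ℝ} (hx : 0 ≤ x) (y : ℝ) : (x ^ (y / 2)) ^ 2 = x ^ y := by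
  rw [← rpow_natCast, ← rpow_mul hx]; norm_num

end Real

theorem factorial_mul_exp_half_le {n : ℕ} (hn : n ≠ 0) :
    (n ! : ℝ) * exp (n / 2) ≤
      √(n ! : ℝ) * exp (1 / 2) * (n : ℝ) ^ ((1 : ℝ) / 4) * (n : ℝ) ^ ((n : ℝ) / 2) := by
  have hsqrt : √(n ! : ℝ) * exp (n / 2) ≤
      exp (1 / 2) * (n : ℝ) ^ ((1 : ℝ) / 4) * (n : ℝ) ^ ((n : ℝ) / 2) := by
    rw [← pow_le_pow_iff_left₀ (by positivity) (by positivity) two_ne_zero, mul_pow, mul_pow,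
      mul_pow, Real.sq_sqrt (by positivity), exp_sq, exp_sq, rpow_div_two_sq (Nat.cast_nonneg n),
      show (1 : ℝ) / 4 = (1 / 2) / 2 by norm_num, rpow_div_two_sq (Nat.cast_nonneg n),
      ← sqrt_eq_rpow, rpow_natCast, ← le_div_iff₀ (by positivity)]
    refine (Stirling.factorial_le_exp_one_mul_sqrt_mul hn).trans_eq ?_
    rw [div_pow, ← exp_nat_mul]
    field_simp
  calc (n ! : ℝ) * exp (n / 2) = √(n ! : ℝ) * (√(n ! : ℝ) * exp (n / 2)) := by
        rw [← mul_assoc, Real.mul_self_sqrt (by positivity)]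
    _ ≤ √(n ! : ℝ) * (exp (1 / 2) * (n : ℝ) ^ ((1 : ℝ) / 4) * (n : ℝ) ^ ((n : ℝ) / 2)) := by
        gcongr
    _ = _ := by ring

/-- Complex Cramér-type inequality for probabilists' Hermite polynomials. -/
theorem stmt_4 (n : ℕ) (hn : 1 ≤ n) (z : ℂ) :
    ‖Polynomial.aeval z (Polynomial.hermite n)‖ ≤
      Real.exp (‖z‖ ^ 2 / 4) * (3 : ℝ) ^ ((n : ℝ) / 2) *
        Real.sqrt (n.factorial) * Real.exp (1 / 2) * (n : ℝ) ^ ((1 : ℝ) / 4) := by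
  set r := ((n : ℝ) / 3) ^ ((1 : ℝ) / 2)
  have hr : 0 < r := by positivity
  have hr_sq : r ^ 2 = n / 3 := by
    rw [rpow_div_two_sq (by positivity), rpow_one]
  have hr_pow : (3 : ℝ) ^ ((n : ℝ) / 2) * r ^ n = (n : ℝ) ^ ((n : ℝ) / 2) := by
    rw [← rpow_natCast, ← rpow_mul (by positivity), one_div_mul_eq_div,
      ← mul_rpow (by norm_num) (by positivity)]
    field_simp
  have hexponent : ‖z‖ * r + r ^ 2 / 2 ≤ ‖z‖ ^ 2 / 4 + n / 2 := by
    nlinarith [sq_nonneg (‖z‖ - 2 * r)]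
  rw [← mul_le_mul_iff_of_pos_right (pow_pos hr n)]
  calc ‖aeval z (hermite n)‖ * r ^ n ≤ n ! * exp (‖z‖ * r + r ^ 2 / 2) :=
        norm_aeval_hermite_mul_pow_le n z hr.le
    _ ≤ exp (‖z‖ ^ 2 / 4) * (n ! * exp (n / 2)) := by
        rw [mul_left_comm, ← exp_add]
        gcongr
    _ ≤ exp (‖z‖ ^ 2 / 4) *
          (√(n ! : ℝ) * exp (1 / 2) * (n : ℝ) ^ ((1 : ℝ) / 4) * (n : ℝ) ^ ((n : ℝ) / 2)) :=
        mul_le_mul_of_nonneg_left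
          (factorial_mul_exp_half_le (Nat.one_le_iff_ne_zero.mp hn)) (exp_pos _).le
    _ = _ := by rw [← hr_pow]; ring
end

section
/- Let μ and ν be two finite signed measures on ℕ whose Fourier transforms satisfy μ̂(ξ) = e^{λ(e^{iξ}−1)}·ψ(ξ) and ν̂(ξ) = e^{λ(e^{iξ}−1)}·χ(ξ) with λ > 0, where ψ and χ are continuously differentiable functions on the torus. Then the total variation distance d_TV(μ,ν) = (1/2)·Σ_{n∈ℕ}|μ(n)−ν(n)| is at most ‖ψ−χ‖_∞/2 + (π/(2√3))·(‖ψ'−χ'‖_∞ + λ·‖ψ−χ‖_∞). -/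
/-!
Put `a n = μ n - ν n` and `f = e^{λ(e^{iξ}-1)} (ψ - χ) = ∑ a n e^{inξ}`. Since
`|e^{λ(e^{iξ}-1)}| = e^{λ(cos ξ - 1)} ≤ 1`, `‖f‖_∞ ≤ ‖ψ - χ‖_∞` bounds `|a 0|`, and
`‖f'‖_∞ ≤ ‖ψ' - χ'‖_∞ + λ ‖ψ - χ‖_∞ =: B`. Integrating by parts, the Fourier coefficients of `f'`
are `i n a n`, so Parseval gives `∑ n² |a n|² ≤ B²`, and Cauchy–Schwarz against
`∑ 1 / n² = π² / 6` bounds `∑_{n ≥ 1} |a n|` by `π B / √6`. The suprema are finite because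
`ψ - χ` is `2π`-periodic, being the quotient of the series `f` by the Poisson factor.
-/

open Complex Real MeasureTheory
open scoped Interval

theorem fourierCoeff_eq_of_hasSum {T : ℝ} [Fact (0 < T)] {ι : Type*} {g : AddCircle T → ℂ}
    {c : ι → ℂ} {k : ι → ℤ} (hk : Function.Injective k) (hc : Summable (‖c ·‖))
    (hg : ∀ t, HasSum (fun i => c i * fourier (k i) t) (g t)) (i : ι) :
    fourierCoeff g (k i) = c i := by
  classical
  have := hk.countable
  set F : ι → AddCircle T → ℂ := fun j t => c j * (fourier (-k i) t * fourier (k j) t)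
  have hF_int (j : ι) : Integrable (F j) AddCircle.haarAddCircle :=
    (((fourier (-k i)).continuous.mul (fourier (k j)).continuous).const_mul
      (c j)).integrable_of_hasCompactSupport (.of_compactSpace _)
  have hF_norm (j : ι) : ∫ t, ‖F j t‖ ∂AddCircle.haarAddCircle = ‖c j‖ := by
    simp [F, fourier_apply, Circle.norm_coe]
  have hF_int_eq (j : ι) : ∫ t, F j t ∂AddCircle.haarAddCircle = if j = i then c i else 0 := by
    have h := congrFun (fourierCoeff_fourier (T := T) (k j)) (k i)
    simp only [fourierCoeff, smul_eq_mul] at h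
    rw [integral_const_mul, h]
    obtain rfl | hji := eq_or_ne j i
    · simp
    · simp [hji, hk.ne hji.symm]
  have hpt (t : AddCircle T) : ∑' j, F j t = fourier (-k i) t • g t := by
    rw [smul_eq_mul, ← ((hg t).mul_left (fourier (-k i) t)).tsum_eq]
    exact tsum_congr fun j => by ring
  have hsum := hasSum_integral_of_summable_integral_norm hF_int (by simpa only [hF_norm] using hc)
  simp only [hF_int_eq, hpt] at hsum
  rw [fourierCoeff, ← hsum.unique (hasSum_ite_eq i (c i))]

section FourierCoeffOn

variable {a b : ℝ} (hab : a < b)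

theorem fourierCoeffOn_eq_of_hasSum {ι : Type*} {f : ℝ → ℂ} {c : ι → ℂ} {k : ι → ℤ}
    (hk : Function.Injective k) (hc : Summable (‖c ·‖))
    (hf : ∀ x : ℝ, HasSum (fun i => c i * fourier (k i) (x : AddCircle (b - a))) (f x)) (i : ι) :
    fourierCoeffOn hab f (k i) = c i := by
  have : Fact (0 < b - a) := ⟨sub_pos.2 hab⟩
  refine fourierCoeff_eq_of_hasSum hk hc (fun t => ?_) i
  simpa [AddCircle.liftIoc] using hf (AddCircle.equivIoc (b - a) a t)

theorem norm_fourierCoeffOn_le {f : ℝ → ℂ} {B : ℝ} (hB : ∀ x ∈ Ι a b, ‖f x‖ ≤ B) (n : ℤ) :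
    ‖fourierCoeffOn hab f n‖ ≤ B := by
  have hba : 0 < b - a := sub_pos.2 hab
  rw [fourierCoeffOn_eq_integral, norm_smul, Real.norm_of_nonneg (by positivity)]
  calc 1 / (b - a) * ‖∫ x in a..b, fourier (-n) (x : AddCircle (b - a)) • f x‖
      ≤ 1 / (b - a) * (B * |b - a|) := by
        gcongr
        refine intervalIntegral.norm_integral_le_of_norm_le_const fun x hx => ?_
        have : Fact (0 < b - a) := ⟨hba⟩
        rw [norm_smul, fourier_apply, Circle.norm_coe, one_mul]
        exact hB x hx
    _ = B := by rw [abs_of_pos hba]; field_simp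

theorem fourierCoeffOn_of_hasDerivAt_of_eq {f f' : ℝ → ℂ}
    (hf : ∀ x ∈ [[a, b]], HasDerivAt f (f' x) x)
    (hf' : IntervalIntegrable f' volume a b) (hfab : f b = f a) {n : ℤ} (hn : n ≠ 0) :
    fourierCoeffOn hab f' n = 2 * π * I * n / (b - a) * fourierCoeffOn hab f n := by
  have hba : ((b - a : ℝ) : ℂ) ≠ 0 := ofReal_ne_zero.2 (sub_pos.2 hab).ne'
  rw [fourierCoeffOn_of_hasDerivAt hab hn hf hf', hfab, sub_self, mul_zero, zero_sub]
  push_cast at hba ⊢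
  field_simp

theorem summable_and_tsum_sq_fourierCoeffOn_le {f : ℝ → ℂ}
    (hf : AEStronglyMeasurable f (volume.restrict (Set.Ioc a b))) {B : ℝ}
    (hB : ∀ x ∈ Ι a b, ‖f x‖ ≤ B) :
    (Summable fun n => ‖fourierCoeffOn hab f n‖ ^ 2) ∧
      ∑' n, ‖fourierCoeffOn hab f n‖ ^ 2 ≤ B ^ 2 := by
  have hba : 0 < b - a := sub_pos.2 hab
  have hL2 : MemLp f 2 (volume.restrict (Set.Ioc a b)) :=
    .of_bound hf B ((ae_restrict_iff' measurableSet_Ioc).2 (.of_forall fun x hx =>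
      hB x (by rwa [Set.uIoc_of_le hab.le])))
  have hparseval := hasSum_sq_fourierCoeffOn hab hL2
  refine ⟨hparseval.summable, hparseval.tsum_eq ▸ ?_⟩
  have hint : ∫ x in a..b, ‖f x‖ ^ 2 ≤ B ^ 2 * (b - a) := by
    refine (le_abs_self _).trans ?_
    rw [← Real.norm_eq_abs, ← abs_of_pos hba]
    refine intervalIntegral.norm_integral_le_of_norm_le_const fun x hx => ?_
    rw [norm_pow, norm_norm]
    exact pow_le_pow_left₀ (norm_nonneg _) (hB x hx) 2
  rw [smul_eq_mul, inv_mul_le_iff₀ hba]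
  linarith

end FourierCoeffOn

theorem exp_mul_add_two_pi_mul_I (n : ℤ) (x : ℝ) :
    exp (n * ↑(x + 2 * π) * I) = exp (n * x * I) := by
  rw [show (n : ℂ) * ↑(x + 2 * π) * I = n * x * I + n * (2 * π * I) by push_cast; ring,
    Complex.exp_add, exp_int_mul_two_pi_mul_I, mul_one]

theorem fourier_coe_eq_exp {T : ℝ} (hT : T = 2 * π) (n : ℤ) (x : ℝ) :
    fourier n (x : AddCircle T) = exp (n * x * I) := by
  subst hT
  rw [fourier_coe_apply]
  congr 1
  push_cast
  field_simp

theorem Function.Periodic.periodic_of_hasDerivAt {E : Type*} [NormedAddCommGroup E]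
    [NormedSpace ℝ E] {f f' : ℝ → E} {c : ℝ} (hf : Periodic f c) (hf' : ∀ x, HasDerivAt f (f' x) x) :
    Periodic f' c := fun x =>
  ((hf' (x + c)).comp_add_const x c).unique (by rw [hf.funext]; exact hf' x)

theorem Function.Periodic.norm_le_ciSup {E : Type*} [SeminormedAddCommGroup E] {f : ℝ → E} {c : ℝ}
    (hf : Periodic f c) (hc : c ≠ 0) (hcont : Continuous f) (x : ℝ) : ‖f x‖ ≤ ⨆ y, ‖f y‖ :=
  le_ciSup ((hf.comp norm).isBounded_of_continuous hc hcont.norm).bddAbove x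

theorem tsum_abs_succ_le_of_summable_sq {u : ℕ → ℝ} (hu : Summable fun n : ℕ => (n * u n) ^ 2) :
    ∑' n, |u (n + 1)| ≤ π / √6 * √(∑' n : ℕ, (n * u n) ^ 2) := by
  have hzeta : HasSum (fun n : ℕ => (1 / ((n : ℝ) + 1)) ^ (2 : ℝ)) (π ^ 2 / 6) := by
    simpa [Real.rpow_two, div_pow] using (hasSum_nat_add_iff' 1).2 hasSum_zeta_two
  have hshift : HasSum (fun n : ℕ => (((n : ℝ) + 1) * |u (n + 1)|) ^ (2 : ℝ))
      (∑' n : ℕ, (n * u n) ^ 2) := by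
    simpa [Real.rpow_two, mul_pow] using (hasSum_nat_add_iff' 1).2 hu.hasSum
  have h := inner_le_Lp_mul_Lq_tsum_of_nonneg Real.HolderConjugate.two_two
    (fun n => by positivity) (fun n => by positivity) hzeta.summable hshift.summable
  rw [hzeta.tsum_eq, hshift.tsum_eq, ← Real.sqrt_eq_rpow, ← Real.sqrt_eq_rpow,
    Real.sqrt_div' _ (by norm_num), Real.sqrt_sq pi_pos.le] at h
  convert h using 2 with n
  field_simp

section TrigonometricSeries

variable {c : ℕ → ℂ} {f : ℝ → ℂ}

theorem periodic_of_hasSum_exp (hf : ∀ x : ℝ, HasSum (fun n : ℕ => c n * exp (n * x * I)) (f x)) :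
    Function.Periodic f (2 * π) := fun x =>
  (hf (x + 2 * π)).unique <| by
    simpa only [← Int.cast_natCast (R := ℂ), exp_mul_add_two_pi_mul_I] using hf x

theorem fourierCoeffOn_two_pi_eq_of_hasSum (hc : Summable (‖c ·‖))
    (hf : ∀ x : ℝ, HasSum (fun n : ℕ => c n * exp (n * x * I)) (f x)) (n : ℕ) :
    fourierCoeffOn two_pi_pos f n = c n :=
  fourierCoeffOn_eq_of_hasSum two_pi_pos Nat.cast_injective hc (fun x => by
    simpa only [fourier_coe_eq_exp (sub_zero _), Int.cast_natCast] using hf x) n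

theorem summable_and_tsum_sq_mul_norm_le (hc : Summable (‖c ·‖))
    (hf : ∀ x : ℝ, HasSum (fun n : ℕ => c n * exp (n * x * I)) (f x)) {f' : ℝ → ℂ}
    (hf' : ∀ x, HasDerivAt f (f' x) x) (hf'c : Continuous f') {B : ℝ} (hB : ∀ x, ‖f' x‖ ≤ B) :
    (Summable fun n : ℕ => (n * ‖c n‖) ^ 2) ∧ ∑' n : ℕ, (n * ‖c n‖) ^ 2 ≤ B ^ 2 := by
  obtain ⟨hsum, hle⟩ := summable_and_tsum_sq_fourierCoeffOn_le two_pi_pos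
    hf'c.aestronglyMeasurable fun x _ => hB x
  have hcoeff (n : ℕ) : (n * ‖c n‖) ^ 2 ≤ ‖fourierCoeffOn two_pi_pos f' n‖ ^ 2 := by
    obtain rfl | hn := eq_or_ne n 0
    · simp
    have hper : f (2 * π) = f 0 := by simpa using periodic_of_hasSum_exp hf 0
    rw [fourierCoeffOn_of_hasDerivAt_of_eq two_pi_pos (fun x _ => hf' x)
      (hf'c.intervalIntegrable _ _) hper (Nat.cast_ne_zero.2 hn),
      fourierCoeffOn_two_pi_eq_of_hasSum hc hf]
    simp [pi_pos.ne']
  have hsum' : Summable fun n : ℕ => (n * ‖c n‖) ^ 2 :=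
    (hsum.comp_injective Nat.cast_injective).of_nonneg_of_le (fun _ => sq_nonneg _) hcoeff
  exact ⟨hsum', (hsum'.tsum_le_tsum_of_inj _ Nat.cast_injective (fun _ _ => sq_nonneg _)
    hcoeff hsum).trans hle⟩

theorem tsum_norm_le_of_hasSum_exp (hc : Summable (‖c ·‖))
    (hf : ∀ x : ℝ, HasSum (fun n : ℕ => c n * exp (n * x * I)) (f x)) {f' : ℝ → ℂ}
    (hf' : ∀ x, HasDerivAt f (f' x) x) (hf'c : Continuous f') {M B : ℝ} (hM : ∀ x, ‖f x‖ ≤ M)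
    (hB : ∀ x, ‖f' x‖ ≤ B) :
    ∑' n, ‖c n‖ ≤ M + π / √6 * B := by
  obtain ⟨hsq, hsq_le⟩ := summable_and_tsum_sq_mul_norm_le hc hf hf' hf'c hB
  have h0 : ‖c 0‖ ≤ M := by
    have h := norm_fourierCoeffOn_le two_pi_pos (fun x _ => hM x) ((0 : ℕ) : ℤ)
    rwa [fourierCoeffOn_two_pi_eq_of_hasSum hc hf] at h
  have htail : ∑' n, ‖c (n + 1)‖ ≤ π / √6 * B := by
    have hB0 : 0 ≤ B := (norm_nonneg _).trans (hB 0)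
    calc ∑' n, ‖c (n + 1)‖ ≤ π / √6 * √(∑' n : ℕ, (n * ‖c n‖) ^ 2) := by
          simpa only [abs_norm] using tsum_abs_succ_le_of_summable_sq hsq
      _ ≤ π / √6 * B := by
          gcongr
          exact (Real.sqrt_le_sqrt hsq_le).trans_eq (Real.sqrt_sq hB0)
  rw [hc.tsum_eq_zero_add]
  exact add_le_add h0 htail

end TrigonometricSeries

noncomputable def poissonCharFun (lam ξ : ℝ) : ℂ := exp (lam * (exp (ξ * I) - 1))

theorem poissonCharFun_ne_zero (lam ξ : ℝ) : poissonCharFun lam ξ ≠ 0 := exp_ne_zero _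

theorem poissonCharFun_periodic (lam : ℝ) : Function.Periodic (poissonCharFun lam) (2 * π) :=
  fun ξ => by
    simpa [poissonCharFun] using
      congrArg (fun z => cexp (lam * (z - 1))) (exp_mul_add_two_pi_mul_I 1 ξ)

theorem norm_poissonCharFun_le_one {lam : ℝ} (hlam : 0 ≤ lam) (ξ : ℝ) :
    ‖poissonCharFun lam ξ‖ ≤ 1 := by
  rw [poissonCharFun, norm_exp, Real.exp_le_one_iff]
  simpa [mul_re, exp_ofReal_mul_I_re] using
    mul_nonpos_of_nonneg_of_nonpos hlam (sub_nonpos.2 (cos_le_one ξ))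

@[fun_prop]
theorem continuous_poissonCharFun (lam : ℝ) : Continuous (poissonCharFun lam) := by
  unfold poissonCharFun
  fun_prop

theorem hasDerivAt_poissonCharFun (lam ξ : ℝ) :
    HasDerivAt (poissonCharFun lam) (lam * (I * exp (ξ * I)) * poissonCharFun lam ξ) ξ := by
  have he : HasDerivAt (fun x : ℝ => exp (x * I)) (I * exp (ξ * I)) ξ := by
    simpa [mul_comm] using ((hasDerivAt_id (ξ : ℂ)).mul_const I).cexp.comp_ofReal
  have h := ((he.sub_const 1).const_mul (lam : ℂ)).cexp
  rwa [mul_comm] at h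

theorem norm_poissonCharFun_mul_add_le {lam : ℝ} (hlam : 0 ≤ lam) (ξ : ℝ) (z w : ℂ) :
    ‖lam * (I * exp (ξ * I)) * poissonCharFun lam ξ * z + poissonCharFun lam ξ * w‖ ≤
      ‖w‖ + lam * ‖z‖ := by
  have hE := norm_poissonCharFun_le_one hlam ξ
  calc _ ≤ lam * ‖poissonCharFun lam ξ‖ * ‖z‖ + ‖poissonCharFun lam ξ‖ * ‖w‖ := by
        refine (norm_add_le _ _).trans_eq ?_
        simp [abs_of_nonneg hlam]
    _ ≤ lam * 1 * ‖z‖ + 1 * ‖w‖ := by gcongr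
    _ = ‖w‖ + lam * ‖z‖ := by ring

theorem stmt_5_general (μ ν : ℕ → ℝ) (lam : ℝ) (hlam : 0 < lam)
    (ψ χ ψ' χ' : ℝ → ℂ)
    (hψ : ∀ ξ : ℝ, HasDerivAt ψ (ψ' ξ) ξ) (hχ : ∀ ξ : ℝ, HasDerivAt χ (χ' ξ) ξ)
    (hψ'c : Continuous ψ') (hχ'c : Continuous χ')
    (hμ : ∀ ξ : ℝ, HasSum (fun n : ℕ => (μ n : ℂ) * Complex.exp (n * ξ * Complex.I))
      (Complex.exp (lam * (Complex.exp (ξ * Complex.I) - 1)) * ψ ξ))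
    (hν : ∀ ξ : ℝ, HasSum (fun n : ℕ => (ν n : ℂ) * Complex.exp (n * ξ * Complex.I))
      (Complex.exp (lam * (Complex.exp (ξ * Complex.I) - 1)) * χ ξ))
    (hsum : Summable (fun n : ℕ => |μ n - ν n|)) :
    (1 / 2) * ∑' n : ℕ, |μ n - ν n| ≤
      (⨆ ξ : ℝ, ‖ψ ξ - χ ξ‖) / 2 +
        (Real.pi / (2 * Real.sqrt 3)) *
          ((⨆ ξ : ℝ, ‖ψ' ξ - χ' ξ‖) +
            lam * (⨆ ξ : ℝ, ‖ψ ξ - χ ξ‖)) := by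
  have hg (ξ : ℝ) : HasDerivAt (fun x => ψ x - χ x) (ψ' ξ - χ' ξ) ξ := (hψ ξ).sub (hχ ξ)
  have hseries (ξ : ℝ) : HasSum (fun n : ℕ => ((μ n - ν n : ℝ) : ℂ) * exp (n * ξ * I))
      (poissonCharFun lam ξ * (ψ ξ - χ ξ)) := by
    simpa [poissonCharFun, sub_mul, mul_sub] using (hμ ξ).sub (hν ξ)
  have hg_per : Function.Periodic (fun x => ψ x - χ x) (2 * π) := fun ξ => by
    simpa [poissonCharFun_ne_zero] using
      ((periodic_of_hasSum_exp hseries).div (poissonCharFun_periodic lam)) ξ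
  have hg_cont : Continuous fun x => ψ x - χ x :=
    continuous_iff_continuousAt.2 fun ξ => (hg ξ).continuousAt
  have hM := hg_per.norm_le_ciSup two_pi_pos.ne' hg_cont
  have hM' := (hg_per.periodic_of_hasDerivAt hg).norm_le_ciSup two_pi_pos.ne' (hψ'c.sub hχ'c)
  have hbound := tsum_norm_le_of_hasSum_exp (c := fun n => ((μ n - ν n : ℝ) : ℂ))
    (by simpa only [norm_real, Real.norm_eq_abs] using hsum) hseries
    (fun ξ => (hasDerivAt_poissonCharFun lam ξ).mul (hg ξ)) (by fun_prop)
    (fun ξ => (norm_mul_le _ _).trans (mul_le_of_le_one_left (norm_nonneg _)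
      (norm_poissonCharFun_le_one hlam.le ξ) |>.trans (hM ξ)))
    (fun ξ => (norm_poissonCharFun_mul_add_le hlam.le ξ _ _).trans
      (add_le_add (hM' ξ) (mul_le_mul_of_nonneg_left (hM ξ) hlam.le)))
  simp only [norm_real, Real.norm_eq_abs] at hbound
  have hB0 : 0 ≤ (⨆ ξ : ℝ, ‖ψ' ξ - χ' ξ‖) + lam * ⨆ ξ : ℝ, ‖ψ ξ - χ ξ‖ :=
    add_nonneg ((norm_nonneg _).trans (hM' 0)) (mul_nonneg hlam.le ((norm_nonneg _).trans (hM 0)))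
  have hconst : π / √6 ≤ π / √3 :=
    div_le_div_of_nonneg_left pi_pos.le (by positivity) (Real.sqrt_le_sqrt (by norm_num))
  have hπ : π / (2 * √3) = π / √3 / 2 := by ring
  rw [hπ]
  linarith [mul_le_mul_of_nonneg_right hconst hB0]

/-- Total variation distance between two signed measures on ℕ whose Fourier
transforms factor through `exp (λ (e^{iξ} - 1))`. -/
theorem stmt_5 (μ ν : ℕ → ℝ) (lam : ℝ) (hlam : 0 < lam)
    (ψ χ ψ' χ' : ℝ → ℂ)
    (hψ : ∀ ξ : ℝ, HasDerivAt ψ (ψ' ξ) ξ) (hχ : ∀ ξ : ℝ, HasDerivAt χ (χ' ξ) ξ)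
    (hψ'c : Continuous ψ') (hχ'c : Continuous χ')
    (hμ : ∀ ξ : ℝ, HasSum (fun n : ℕ => (μ n : ℂ) * Complex.exp (n * ξ * Complex.I))
      (Complex.exp (lam * (Complex.exp (ξ * Complex.I) - 1)) * ψ ξ))
    (hν : ∀ ξ : ℝ, HasSum (fun n : ℕ => (ν n : ℂ) * Complex.exp (n * ξ * Complex.I))
      (Complex.exp (lam * (Complex.exp (ξ * Complex.I) - 1)) * χ ξ))
    (hsum : Summable (fun n : ℕ => |μ n - ν n|))
    (hsum2 : Summable (fun n : ℕ => ((n : ℝ) * |μ n - ν n|) ^ 2)) :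
    (1 / 2) * ∑' n : ℕ, |μ n - ν n| ≤
      (⨆ ξ : ℝ, ‖ψ ξ - χ ξ‖) / 2 +
        (Real.pi / (2 * Real.sqrt 3)) *
          ((⨆ ξ : ℝ, ‖ψ' ξ - χ' ξ‖) +
            lam * (⨆ ξ : ℝ, ‖ψ ξ - χ ξ‖)) :=
  stmt_5_general μ ν lam hlam ψ χ ψ' χ' hψ hχ hψ'c hχ'c hμ hν hsum
end

section
/- Let θ > 0, ρ > 1, and let w be a complex number with |w| ≤ ρ. If n ≥ 2θρ + 1, then |Γ(n + θw)/n! − n^{θw−1}| ≤ B·n^{θ·Re(w)−2}, where B = 3·(θρ + 1/2)²·e^{(3/2)(θρ + 1/2)}. -/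
/-!
Gauss's product formula for `Γ` gives, for real `x ≥ 2` and `2‖a‖ ≤ x`,
`Γ(x + a) x^(1 - a) / Γ(x + 1) = exp T` with `T = ∑ⱼ (a log(1 + 1/(x+j)) - log(1 + a/(x+j)))`.
Since `‖log(1 + z) - z‖ ≤ ‖z‖²` for `‖z‖ ≤ 1/2`, the `j`-th term is at most
`(‖a‖ + ‖a‖²)/(x+j)²`, so `‖T‖ ≤ (‖a‖ + ‖a‖²)/(x - 1)`; multiplying `‖e^T - 1‖ ≤ ‖T‖ e^‖T‖`
by `‖x^(a-1)‖ = x^(Re a - 1)` gives the estimate.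
-/

open Complex Filter Finset Topology

lemma Complex.norm_log_one_add_sub_self_le_sq {z : ℂ} (hz : ‖z‖ ≤ 1 / 2) :
    ‖log (1 + z) - z‖ ≤ ‖z‖ ^ 2 := by
  refine (norm_log_one_add_sub_self_le (by linarith)).trans ?_
  have : (1 - ‖z‖)⁻¹ ≤ 2 := by rw [inv_le_comm₀ (by linarith) two_pos]; linarith
  nlinarith [sq_nonneg ‖z‖]

lemma sum_range_one_div_add_sq_le {x : ℝ} (hx : 1 < x) (m : ℕ) :
    ∑ j ∈ range m, 1 / (x + j) ^ 2 ≤ 1 / (x - 1) := by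
  have hterm : ∀ j : ℕ, 1 / (x + j) ^ 2 ≤ 1 / (x - 1 + j) - 1 / (x - 1 + (j + 1 : ℕ)) := by
    intro j
    have hj : (0 : ℝ) ≤ j := j.cast_nonneg
    rw [Nat.cast_succ, div_sub_div _ _ (by positivity) (by positivity), div_le_div_iff₀
      (by positivity) (by positivity)]
    nlinarith
  calc ∑ j ∈ range m, 1 / (x + j) ^ 2
      ≤ ∑ j ∈ range m, (1 / (x - 1 + j) - 1 / (x - 1 + (j + 1 : ℕ))) := sum_le_sum fun j _ ↦ hterm j
    _ = 1 / (x - 1) - 1 / (x - 1 + m) := by rw [sum_range_sub' (fun j : ℕ ↦ 1 / (x - 1 + j))]; simp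
    _ ≤ 1 / (x - 1) := sub_le_self _ (by have := m.cast_nonneg (α := ℝ); positivity)

lemma summable_one_div_add_sq {x : ℝ} (hx : 1 < x) : Summable fun j : ℕ ↦ 1 / (x + j) ^ 2 :=
  summable_of_sum_range_le (fun _ ↦ by positivity) (sum_range_one_div_add_sq_le hx)

lemma tsum_one_div_add_sq_le {x : ℝ} (hx : 1 < x) : ∑' j : ℕ, 1 / (x + j) ^ 2 ≤ 1 / (x - 1) :=
  Real.tsum_le_of_sum_range_le (fun _ ↦ by positivity) (sum_range_one_div_add_sq_le hx)

lemma Complex.norm_exp_sub_one_le_norm_mul_exp (z : ℂ) : ‖exp z - 1‖ ≤ ‖z‖ * Real.exp ‖z‖ := by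
  simpa using norm_exp_sub_sum_le_norm_mul_exp z 1

lemma Complex.GammaSeq_div_GammaSeq (s t : ℂ) {m : ℕ} (hm : m ≠ 0) :
    GammaSeq s m / GammaSeq t m = (m : ℂ) ^ (s - t) * ∏ j ∈ range (m + 1), (t + j) / (s + j) := by
  have hm' : (m : ℂ) ≠ 0 := Nat.cast_ne_zero.mpr hm
  have hfac : (m.factorial : ℂ) ≠ 0 := Nat.cast_ne_zero.mpr m.factorial_ne_zero
  rw [GammaSeq, GammaSeq, cpow_sub _ _ hm', prod_div_distrib]
  field_simp

lemma Complex.tendsto_cpow_sub_mul_prod_div (s t : ℂ) (ht : Gamma t ≠ 0) :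
    Tendsto (fun m : ℕ ↦ (m : ℂ) ^ (s - t) * ∏ j ∈ range (m + 1), (t + j) / (s + j)) atTop
      (𝓝 (Gamma s / Gamma t)) :=
  ((GammaSeq_tendsto_Gamma s).div (GammaSeq_tendsto_Gamma t) ht).congr'
    (eventually_ne_atTop 0 |>.mono fun _ hm ↦ GammaSeq_div_GammaSeq s t hm)

/-- `exp (logGaussFactor x a j) = (1 + 1/(x+j))^a / (1 + a/(x+j))` is the `j`-th factor of
Gauss's product for `Γ(x + a) x^(1 - a) / Γ(x + 1)`. -/
noncomputable def logGaussFactor (x : ℝ) (a : ℂ) (j : ℕ) : ℂ :=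
  a * Real.log (1 + 1 / (x + j)) - log (1 + a / (x + j))

section
variable {x : ℝ} {a : ℂ}

lemma norm_logGaussFactor_le (hx : 2 ≤ x) (ha : 2 * ‖a‖ ≤ x) (j : ℕ) :
    ‖logGaussFactor x a j‖ ≤ (‖a‖ + ‖a‖ ^ 2) * (1 / (x + j) ^ 2) := by
  have hxj : 2 ≤ x + j := le_add_of_le_of_nonneg hx j.cast_nonneg
  set r : ℝ := 1 / (x + j) with hr
  have hr_half : r ≤ 1 / 2 := one_div_le_one_div_of_le two_pos hxj
  have hr_nonneg : 0 ≤ r := by positivity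
  have har_half : ‖a‖ * r ≤ 1 / 2 := by
    rw [hr, mul_one_div, div_le_div_iff₀ (by linarith) two_pos]; linarith
  have hnorm_r : ‖(r : ℂ)‖ = r := by rw [norm_real, Real.norm_of_nonneg hr_nonneg]
  have hu : logGaussFactor x a j = a * (log (1 + r) - r) - (log (1 + a * r) - a * r) := by
    have hcast : ((1 + r : ℝ) : ℂ) = 1 + r := by push_cast; ring
    rw [logGaussFactor, ← hr, ofReal_log (by linarith), hcast, hr]
    push_cast
    rw [mul_one_div]
    ring
  rw [hu]
  calc ‖a * (log (1 + r) - r) - (log (1 + a * r) - a * r)‖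
      ≤ ‖a‖ * ‖log (1 + r) - r‖ + ‖log (1 + a * r) - a * r‖ := by
        rw [← norm_mul]; exact norm_sub_le _ _
    _ ≤ ‖a‖ * r ^ 2 + (‖a‖ * r) ^ 2 := by
        have h1 := norm_log_one_add_sub_self_le_sq (z := r) (by rwa [hnorm_r])
        have h2 := norm_log_one_add_sub_self_le_sq (z := a * r) (by rwa [norm_mul, hnorm_r])
        rw [hnorm_r] at h1
        rw [norm_mul, hnorm_r] at h2
        gcongr
    _ = (‖a‖ + ‖a‖ ^ 2) * (1 / (x + j) ^ 2) := by rw [hr]; field_simp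

lemma summable_norm_logGaussFactor (hx : 2 ≤ x) (ha : 2 * ‖a‖ ≤ x) :
    Summable fun j ↦ ‖logGaussFactor x a j‖ :=
  .of_nonneg_of_le (fun _ ↦ norm_nonneg _) (norm_logGaussFactor_le hx ha)
    ((summable_one_div_add_sq (by linarith)).mul_left _)

lemma norm_tsum_logGaussFactor_le (hx : 2 ≤ x) (ha : 2 * ‖a‖ ≤ x) :
    ‖∑' j, logGaussFactor x a j‖ ≤ (‖a‖ + ‖a‖ ^ 2) / (x - 1) :=
  calc ‖∑' j, logGaussFactor x a j‖ ≤ ∑' j, ‖logGaussFactor x a j‖ :=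
        norm_tsum_le_tsum_norm (summable_norm_logGaussFactor hx ha)
    _ ≤ ∑' j : ℕ, (‖a‖ + ‖a‖ ^ 2) * (1 / (x + j) ^ 2) :=
        (summable_norm_logGaussFactor hx ha).tsum_le_tsum (norm_logGaussFactor_le hx ha)
          ((summable_one_div_add_sq (by linarith)).mul_left _)
    _ ≤ (‖a‖ + ‖a‖ ^ 2) * (1 / (x - 1)) := by
        rw [tsum_mul_left]; gcongr; exact tsum_one_div_add_sq_le (by linarith)
    _ = (‖a‖ + ‖a‖ ^ 2) / (x - 1) := mul_one_div _ _

lemma Complex.ofReal_add_add_natCast_ne_zero (ha : ‖a‖ < x) (j : ℕ) : (x : ℂ) + a + j ≠ 0 := by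
  intro h
  have hre := congrArg re h
  simp only [add_re, ofReal_re, natCast_re, zero_re] at hre
  linarith [neg_le_of_abs_le (abs_re_le_norm a), j.cast_nonneg (α := ℝ)]

lemma exp_sum_range_logGaussFactor (hx : 0 < x) (ha : ‖a‖ < x) (m : ℕ) :
    exp (∑ j ∈ range m, logGaussFactor x a j) =
      exp (a * (Real.log (x + m) - Real.log x)) * ∏ j ∈ range m, (x + j) / (x + a + j) := by
  have hxj (j : ℕ) : (x : ℂ) + j ≠ 0 := by exact_mod_cast (by positivity : x + j ≠ 0)
  have hlog (j : ℕ) :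
      Real.log (1 + 1 / (x + j)) = Real.log (x + (j + 1 : ℕ)) - Real.log (x + j) := by
    rw [← Real.log_div (by positivity) (by positivity)]
    congr 1
    field_simp
    push_cast
    ring
  have hfactor (j : ℕ) : exp (- log (1 + a / (x + j))) = (x + j) / (x + a + j) := by
    have hne : 1 + a / (x + j) ≠ 0 := by
      rw [one_add_div (hxj j)]
      refine div_ne_zero ?_ (hxj j)
      simpa [add_right_comm] using ofReal_add_add_natCast_ne_zero ha j
    rw [exp_neg, exp_log hne, one_add_div (hxj j), inv_div, add_right_comm]
  simp only [logGaussFactor, sub_eq_add_neg, sum_add_distrib, ← mul_sum, exp_add, exp_sum, hfactor,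
    hlog]
  have htel := sum_range_sub (fun i ↦ Real.log (x + i)) m
  simp only [Nat.cast_zero, add_zero, sub_eq_add_neg] at htel
  rw [← ofReal_neg, ← ofReal_add, ← htel, ofReal_sum]

lemma prod_range_ofReal_add_one_add_div (hx : 0 < x) (M : ℕ) :
    ∏ j ∈ range M, ((x : ℂ) + 1 + j) / (x + a + j) =
      ((x + M : ℝ) : ℂ) / x * ∏ j ∈ range M, ((x : ℂ) + j) / (x + a + j) := by
  have hshift := (prod_range_succ' (fun j : ℕ ↦ (x : ℂ) + j) M).symm.trans
    (prod_range_succ (fun j : ℕ ↦ (x : ℂ) + j) M)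
  simp only [Nat.cast_add, Nat.cast_one, Nat.cast_zero, add_zero, ← add_assoc,
    add_right_comm _ _ (1 : ℂ)] at hshift
  have hx' : (x : ℂ) ≠ 0 := ofReal_ne_zero.mpr hx.ne'
  have hnum : ∏ j ∈ range M, ((x : ℂ) + 1 + j) =
      ((x + M : ℝ) : ℂ) / x * ∏ j ∈ range M, ((x : ℂ) + j) := by
    field_simp
    push_cast
    linear_combination hshift
  rw [prod_div_distrib, prod_div_distrib, hnum, mul_div_assoc]

lemma cpow_mul_prod_div_mul_cpow_eq (hx : 0 < x) (ha : ‖a‖ < x) {m : ℕ} (hm : m ≠ 0) :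
    (m : ℂ) ^ (a - 1) * (∏ j ∈ range (m + 1), ((x : ℂ) + 1 + j) / (x + a + j)) * (x : ℂ) ^ (1 - a) =
      exp (∑ j ∈ range (m + 1), logGaussFactor x a j) *
        exp ((a - 1) * (Real.log m - Real.log (x + (m + 1 : ℕ)))) := by
  have hxM : 0 < x + (m + 1 : ℕ) := by positivity
  rw [exp_sum_range_logGaussFactor hx ha, prod_range_ofReal_add_one_add_div hx,
    cpow_def_of_ne_zero (Nat.cast_ne_zero.mpr hm), cpow_def_of_ne_zero (ofReal_ne_zero.mpr hx.ne'),
    ← natCast_log, ← ofReal_log hx.le]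
  generalize ∏ j ∈ range (m + 1), ((x : ℂ) + j) / (x + a + j) = P
  set Lm : ℂ := (Real.log m : ℂ)
  set Lx : ℂ := (Real.log x : ℂ)
  set LM : ℂ := (Real.log (x + (m + 1 : ℕ)) : ℂ)
  have hexpLM : ((x + (m + 1 : ℕ) : ℝ) : ℂ) = exp LM := by rw [← ofReal_exp, Real.exp_log hxM]
  have hexpLx : (x : ℂ) = exp Lx := by rw [← ofReal_exp, Real.exp_log hx]
  rw [hexpLM, hexpLx]
  have h : exp (Lm * (a - 1)) * exp LM * exp (Lx * (1 - a)) =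
      exp (a * (LM - Lx)) * exp ((a - 1) * (Lm - LM)) * exp Lx := by
    simp only [← exp_add]; congr 1; ring
  field_simp
  linear_combination P * h

theorem Gamma_add_div_Gamma_add_one_mul_cpow (hx : 2 ≤ x) (ha : 2 * ‖a‖ ≤ x) :
    Gamma (x + a) / Gamma (x + 1) * (x : ℂ) ^ (1 - a) = exp (∑' j, logGaussFactor x a j) := by
  have hx0 : 0 < x := by linarith
  have ha' : ‖a‖ < x := by linarith [norm_nonneg a]
  have hGamma : Gamma (x + 1) ≠ 0 :=
    Gamma_ne_zero_of_re_pos (by simp only [add_re, ofReal_re, one_re]; linarith)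
  have hGauss :=
    (tendsto_cpow_sub_mul_prod_div (x + a) (x + 1) hGamma).mul_const ((x : ℂ) ^ (1 - a))
  rw [add_sub_add_left_eq_sub] at hGauss
  have hsum : Tendsto (fun m : ℕ ↦ ∑ j ∈ range (m + 1), logGaussFactor x a j) atTop
      (𝓝 (∑' j, logGaussFactor x a j)) :=
    (summable_norm_logGaussFactor hx ha).of_norm.hasSum.tendsto_sum_nat.comp
      (tendsto_add_atTop_nat 1)
  have hlog : Tendsto (fun m : ℕ ↦ Real.log m - Real.log (x + (m + 1 : ℕ))) atTop (𝓝 0) := by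
    have := ((Real.tendsto_log_comp_add_sub_log (x + 1)).comp tendsto_natCast_atTop_atTop).neg
    rw [neg_zero] at this
    refine this.congr fun m ↦ ?_
    simp only [Function.comp_apply, neg_sub, Nat.cast_succ]
    ring_nf
  have hcorr : Tendsto (fun m : ℕ ↦ exp ((a - 1) * (Real.log m - Real.log (x + (m + 1 : ℕ)))))
      atTop (𝓝 1) := by
    simpa using ((continuous_ofReal.tendsto 0).comp hlog).const_mul (a - 1) |>.cexp
  have hlim := tendsto_nhds_unique (hGauss.congr' ((eventually_ne_atTop 0).mono
    fun m hm ↦ cpow_mul_prod_div_mul_cpow_eq hx0 ha' hm)) (hsum.cexp.mul hcorr)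
  rwa [mul_one] at hlim

theorem norm_Gamma_add_div_Gamma_add_one_sub_cpow_le (hx : 2 ≤ x) (ha : 2 * ‖a‖ ≤ x) :
    ‖Gamma (x + a) / Gamma (x + 1) - (x : ℂ) ^ (a - 1)‖ ≤
      x ^ (a.re - 1) * ((‖a‖ + ‖a‖ ^ 2) / (x - 1) * Real.exp ((‖a‖ + ‖a‖ ^ 2) / (x - 1))) := by
  have hx0 : 0 < x := by linarith
  set T := ∑' j, logGaussFactor x a j
  have hT := norm_tsum_logGaussFactor_le hx ha
  have hK0 : 0 ≤ (‖a‖ + ‖a‖ ^ 2) / (x - 1) := div_nonneg (by positivity) (by linarith)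
  have hpow : (x : ℂ) ^ (1 - a) * (x : ℂ) ^ (a - 1) = 1 := by
    rw [← cpow_add _ _ (ofReal_ne_zero.mpr hx0.ne'), sub_add_sub_cancel', sub_self, cpow_zero]
  have hdiff : Gamma (x + a) / Gamma (x + 1) - (x : ℂ) ^ (a - 1) =
      (x : ℂ) ^ (a - 1) * (exp T - 1) := by
    rw [← Gamma_add_div_Gamma_add_one_mul_cpow hx ha]
    linear_combination (Gamma (x + a) / Gamma (x + 1)) * hpow.symm
  rw [hdiff, norm_mul, norm_cpow_eq_rpow_re_of_pos hx0, sub_re, one_re]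
  gcongr
  exact (norm_exp_sub_one_le_norm_mul_exp T).trans
    (mul_le_mul hT (Real.exp_le_exp.mpr hT) (by positivity) hK0)
end

/-- Quantitative Stirling-type estimate: for `|w| ≤ ρ` and `n ≥ 2θρ + 1`,
`|Γ(n + θw)/n! − n^{θw−1}| ≤ B n^{θ Re(w) − 2}`. -/
theorem stmt_14 (θ ρ : ℝ) (hθ : 0 < θ) (hρ : 1 < ρ) (w : ℂ) (hw : ‖w‖ ≤ ρ)
    (n : ℕ) (hn : 2 * θ * ρ + 1 ≤ (n : ℝ)) :
    ‖Complex.Gamma (n + θ * w) / (n.factorial : ℂ) -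
        (n : ℂ) ^ ((θ : ℂ) * w - 1)‖ ≤
      3 * (θ * ρ + 1 / 2) ^ 2 * Real.exp ((3 / 2) * (θ * ρ + 1 / 2)) *
        (n : ℝ) ^ (θ * w.re - 2) := by
  set c := θ * ρ + 1 / 2 with hc
  have hθρ : 0 < θ * ρ := mul_pos hθ (by linarith)
  have hnorm_a : ‖(θ : ℂ) * w‖ + 1 / 2 ≤ c := by
    rw [norm_mul, norm_real, Real.norm_of_nonneg hθ.le, hc]; gcongr
  have hcn : 2 * c ≤ n := by linarith
  have hn2 : (2 : ℝ) ≤ n := by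
    have : 1 < n := by exact_mod_cast (by linarith : (1 : ℝ) < n)
    exact_mod_cast this
  set K := (‖(θ : ℂ) * w‖ + ‖(θ : ℂ) * w‖ ^ 2) / (n - 1)
  have hK : K ≤ 3 * c ^ 2 / n := by
    have hnum : ‖(θ : ℂ) * w‖ + ‖(θ : ℂ) * w‖ ^ 2 ≤ c ^ 2 := by
      nlinarith [norm_nonneg ((θ : ℂ) * w)]
    rw [div_le_div_iff₀ (by linarith) (by linarith)]
    nlinarith [mul_le_mul_of_nonneg_right hnum (by linarith : (0 : ℝ) ≤ n)]
  have hKc : K ≤ 3 / 2 * c := hK.trans <| by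
    rw [div_le_iff₀ (by linarith)]
    nlinarith [mul_le_mul_of_nonneg_left hcn (by linarith : 0 ≤ c)]
  have hK0 : 0 ≤ K := div_nonneg (by positivity) (by linarith)
  have hmain := norm_Gamma_add_div_Gamma_add_one_sub_cpow_le (x := n) (a := θ * w) hn2 (by linarith)
  rw [show ((n : ℝ) : ℂ) + 1 = (n : ℕ) + 1 by push_cast; ring, Gamma_nat_eq_factorial,
    re_ofReal_mul] at hmain
  push_cast at hmain
  refine hmain.trans ?_
  calc (n : ℝ) ^ (θ * w.re - 1) * (K * Real.exp K)
      ≤ (n : ℝ) ^ (θ * w.re - 1) * (3 * c ^ 2 / n * Real.exp (3 / 2 * c)) := by gcongr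
    _ = 3 * c ^ 2 * Real.exp (3 / 2 * c) * (n : ℝ) ^ (θ * w.re - 2) := by
        rw [show θ * w.re - 1 = θ * w.re - 2 + 1 by ring, Real.rpow_add_one (by linarith)]
        field_simp
end
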